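/- Let p be an odd prime and N = 2p. Then 2·S_A(4) ≡ (3·4^p − 5) + (4^p + 5)·((4^N − 1)/15) − ((2/p)·4^p + 1)·G_p (mod 4^N − 1), where (2/p) is the Legendre symbol of 2 modulo p. -/

import Mathlib

/-!
Work in any commutative ring with an element `x` such that `x ^ (2p) = 1`; the theorem is the case
`x = 4` in `ZMod (4 ^ (2p) - 1)`, where `(4 ^ (2p) - 1) / 15 = E := ∑_{j<p} x ^ (2j)`.
Since `2·a(i)` is `5 - (j/p)` for `i = 2j` and `1 - (i/p)` for odd `i`, up to corrections at `i = 0`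
and `i = p`, one gets `2·S_A(x) = (5 + x) E - 5 + 3 x^p - G - T` with `T = ∑_{j<p} ((2j+1)/p) x^(2j+1)`.
As `x^(2p) = 1`, shifting `a ↦ 2a + p` through the odd residues mod `2p` gives `T = (2/p) x^p G`.
What is left is `(x^p - x) E = 0`: for odd `p`, `x^p - x` is a multiple of `x^2 - 1`, and
`(x^2 - 1) E = x^(2p) - 1`.
-/

/-- The quaternary cyclotomic sequence of period 2p from Kim et al.:
`a 0 = 0`, `a p = 2`; for odd `i ≠ p`, value `0`/`1` according to Legendre symbol `(i/p) = ±1`;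
for even `i > 0`, value `2`/`3` according to `((i/2)/p) = ±1`. -/
def seqA (p : ℕ) [Fact p.Prime] (i : ℕ) : ℤ :=
  if i = 0 then 0
  else if i = p then 2
  else if i % 2 = 1 then (if legendreSym p i = 1 then 0 else 1)
  else if legendreSym p (i / 2) = 1 then 2 else 3

/-- `S_A(4) = Σ_{i=0}^{2p-1} a(i)·4^i`. -/
def SA (p : ℕ) [Fact p.Prime] : ℤ := ∑ i ∈ Finset.range (2 * p), seqA p i * 4 ^ i

/-- The Gauss sum `G_p = Σ_{a=1}^{p-1} (a/p)·4^{2a}`. -/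
def Gp (p : ℕ) [Fact p.Prime] : ℤ := ∑ a ∈ Finset.Icc 1 (p - 1), legendreSym p a * 4 ^ (2 * a)

open Finset

lemma Finset.sum_range_two_mul {M : Type*} [AddCommMonoid M] (n : ℕ) (f : ℕ → M) :
    ∑ i ∈ range (2 * n), f i = ∑ j ∈ range n, (f (2 * j) + f (2 * j + 1)) := by
  induction n with
  | zero => simp
  | succ n ih => rw [show 2 * (n + 1) = 2 * n + 1 + 1 by ring, sum_range_succ, sum_range_succ, ih,
      sum_range_succ, add_assoc]

lemma Finset.sum_eq_sum_add_sub_of_eqOn_erase {R : Type*} [AddCommGroup R] {s : Finset ℕ} {a : ℕ}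
    {f g : ℕ → R} (ha : a ∈ s) (hfg : ∀ j ∈ s.erase a, f j = g j) :
    ∑ j ∈ s, f j = ∑ j ∈ s, g j + (f a - g a) := by
  rw [← add_sum_erase s f ha, ← add_sum_erase s g ha, sum_congr rfl hfg]
  abel

lemma Function.Periodic.sum_range_add {M : Type*} [AddCancelCommMonoid M] {g : ℕ → M} {p : ℕ}
    (hg : Function.Periodic g p) (m : ℕ) :
    ∑ a ∈ range p, g (a + m) = ∑ a ∈ range p, g a := by
  induction m with
  | zero => rfl
  | succ m ih =>
    have h := sum_range_succ (fun a => g (a + m)) p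
    rw [sum_range_succ', add_comm p m, hg m, ih] at h
    refine add_right_cancel (b := g m) ?_
    rw [← h, zero_add]
    simp only [add_assoc, add_comm 1 m]

lemma pow_sub_self_mul_sum_pow_two_mul_eq_zero {R : Type*} [CommRing R] {x : R} {p : ℕ} (hp : Odd p)
    (hx : x ^ (2 * p) = 1) : (x ^ p - x) * ∑ j ∈ range p, x ^ (2 * j) = 0 := by
  obtain ⟨m, rfl⟩ := hp
  have hE : (x ^ 2 - 1) * ∑ j ∈ range (2 * m + 1), x ^ (2 * j) = 0 := by
    simp_rw [pow_mul, mul_geom_sum, ← pow_mul, hx, sub_self]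
  linear_combination (x * ∑ k ∈ range m, (x ^ 2) ^ k) * hE
    - (x * ∑ j ∈ range (2 * m + 1), x ^ (2 * j)) * mul_geom_sum (x ^ 2) m

section SeqA

variable {p : ℕ} [Fact p.Prime]

lemma legendreSym_natCast_eq_one_or_neg_one {a : ℕ} (ha : ¬ p ∣ a) :
    legendreSym p a = 1 ∨ legendreSym p a = -1 :=
  legendreSym.eq_one_or_neg_one p (by rwa [Int.cast_natCast, Ne, ZMod.natCast_eq_zero_iff])

lemma legendreSym_natCast_add_mul_self (a k : ℕ) :
    legendreSym p ((a + p * k : ℕ) : ℤ) = legendreSym p a := by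
  simp [legendreSym]

lemma not_dvd_two_mul_of_odd (hp : Odd p) {j : ℕ} (hj0 : j ≠ 0) (hjp : j < p) : ¬ p ∣ 2 * j := by
  intro h
  rcases (Nat.Prime.dvd_mul Fact.out).mp h with h2 | hj
  · obtain ⟨m, rfl⟩ := hp
    have := Nat.le_of_dvd two_pos h2
    omega
  · exact absurd (Nat.le_of_dvd (Nat.pos_of_ne_zero hj0) hj) (by omega)

lemma seqA_zero : seqA p 0 = 0 := by simp [seqA]

lemma seqA_self : seqA p p = 2 := by simp [seqA, (Fact.out : p.Prime).ne_zero]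

lemma two_mul_seqA_of_odd {i : ℕ} (hi : Odd i) (hpi : ¬ p ∣ i) :
    2 * seqA p i = 1 - legendreSym p i := by
  have hi0 : i ≠ 0 := by rintro rfl; exact hpi (dvd_zero p)
  have hip : i ≠ p := by rintro rfl; exact hpi dvd_rfl
  rcases legendreSym_natCast_eq_one_or_neg_one hpi with h | h <;>
    simp [seqA, hi0, hip, Nat.odd_iff.mp hi, h]

lemma two_mul_seqA_two_mul {j : ℕ} (hj : ¬ p ∣ 2 * j) :
    2 * seqA p (2 * j) = 5 - legendreSym p j := by
  have h0 : 2 * j ≠ 0 := by intro h; exact hj (h ▸ dvd_zero p)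
  have hp : 2 * j ≠ p := by intro h; exact hj (h ▸ dvd_rfl)
  rcases legendreSym_natCast_eq_one_or_neg_one (fun h => hj (h.mul_left 2)) with h | h <;>
    simp [seqA, h0, hp, h]

end SeqA

section SumIdentity

variable {R : Type*} [CommRing R] {p : ℕ} [Fact p.Prime]

lemma sum_two_mul_seqA_two_mul_mul_pow (hp : Odd p) (x : R) :
    ∑ j ∈ range p, 2 * ((seqA p (2 * j) : R) * x ^ (2 * j))
      = 5 * ∑ j ∈ range p, x ^ (2 * j)
        - ∑ j ∈ range p, (legendreSym p j : R) * x ^ (2 * j) - 5 := by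
  have hp0 : 0 ∈ range p := mem_range.2 (Fact.out : p.Prime).pos
  rw [sum_eq_sum_add_sub_of_eqOn_erase (g := fun j => (5 - (legendreSym p j : R)) * x ^ (2 * j)) hp0]
  · simp [seqA_zero, sub_mul, sum_sub_distrib, mul_sum, ← sub_eq_add_neg]
  · intro j hj
    obtain ⟨hj0, hjp⟩ := mem_erase.1 hj
    have h := congrArg (Int.cast : ℤ → R)
      (two_mul_seqA_two_mul (not_dvd_two_mul_of_odd hp hj0 (mem_range.1 hjp)))
    simp only [Int.cast_mul, Int.cast_sub, Int.cast_ofNat] at h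
    rw [← mul_assoc, h]

lemma sum_two_mul_seqA_two_mul_add_one_mul_pow (hp : Odd p) (x : R) :
    ∑ j ∈ range p, 2 * ((seqA p (2 * j + 1) : R) * x ^ (2 * j + 1))
      = x * ∑ j ∈ range p, x ^ (2 * j)
        - ∑ j ∈ range p, (legendreSym p (2 * j + 1 : ℕ) : R) * x ^ (2 * j + 1) + 3 * x ^ p := by
  obtain ⟨m, hm⟩ := hp
  have hmp : m ∈ range p := mem_range.2 (by omega)
  rw [sum_eq_sum_add_sub_of_eqOn_erase
    (g := fun j => (1 - (legendreSym p (2 * j + 1 : ℕ) : R)) * x ^ (2 * j + 1)) hmp, ← hm,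
    seqA_self, (legendreSym.eq_zero_iff p p).2 (by simp)]
  · simp only [sub_mul, one_mul, sum_sub_distrib, mul_sum, pow_succ', Int.cast_zero, Int.cast_ofNat]
    ring
  · intro j hj
    obtain ⟨hjm, hjp⟩ := mem_erase.1 hj
    rw [mem_range] at hjp
    have hpj : ¬ p ∣ 2 * j + 1 := fun h => by
      have := Nat.eq_of_dvd_of_lt_two_mul (by omega) h (by omega)
      omega
    have h := congrArg (Int.cast : ℤ → R) (two_mul_seqA_of_odd (odd_two_mul_add_one j) hpj)
    simp only [Int.cast_mul, Int.cast_sub, Int.cast_one, Int.cast_ofNat] at h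
    rw [← mul_assoc, h]

lemma sum_legendreSym_two_mul_add_one_mul_pow (hp : Odd p) {x : R} (hx : x ^ (2 * p) = 1) :
    ∑ j ∈ range p, (legendreSym p (2 * j + 1 : ℕ) : R) * x ^ (2 * j + 1)
      = legendreSym p 2 * x ^ p * ∑ a ∈ range p, (legendreSym p a : R) * x ^ (2 * a) := by
  obtain ⟨m, hm⟩ := hp
  have hg : Function.Periodic
      (fun j => (legendreSym p (2 * j + 1 : ℕ) : R) * x ^ (2 * j + 1)) p := fun j => by
    dsimp only
    rw [show 2 * (j + p) + 1 = 2 * j + 1 + p * 2 by ring, legendreSym_natCast_add_mul_self,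
      pow_add, mul_comm p 2, hx, mul_one]
  rw [mul_sum, ← hg.sum_range_add m]
  refine sum_congr rfl fun a _ => ?_
  rw [show 2 * (a + m) + 1 = 2 * a + p * 1 by omega, legendreSym_natCast_add_mul_self, mul_one,
    pow_add, Nat.cast_mul, Nat.cast_ofNat, legendreSym.mul, Int.cast_mul]
  ring

theorem two_mul_sum_seqA_mul_pow (hp : Odd p) {x : R} (hx : x ^ (2 * p) = 1) :
    2 * ∑ i ∈ range (2 * p), (seqA p i : R) * x ^ i
      = 3 * x ^ p - 5 + (x ^ p + 5) * ∑ j ∈ range p, x ^ (2 * j)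
        - (legendreSym p 2 * x ^ p + 1) * ∑ a ∈ range p, (legendreSym p a : R) * x ^ (2 * a) := by
  rw [mul_sum, sum_range_two_mul, sum_add_distrib, sum_two_mul_seqA_two_mul_mul_pow hp,
    sum_two_mul_seqA_two_mul_add_one_mul_pow hp, sum_legendreSym_two_mul_add_one_mul_pow hp hx]
  linear_combination -pow_sub_self_mul_sum_pow_two_mul_eq_zero hp hx

end SumIdentity

lemma four_pow_two_mul_sub_one_div_fifteen (n : ℕ) :
    ((4 : ℤ) ^ (2 * n) - 1) / 15 = ∑ j ∈ range n, 4 ^ (2 * j) := by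
  have h : (4 : ℤ) ^ (2 * n) - 1 = 15 * ∑ j ∈ range n, 4 ^ (2 * j) := by
    simp_rw [pow_mul, ← mul_geom_sum]
    norm_num
  rw [h, Int.mul_ediv_cancel_left _ (by norm_num)]

lemma Gp_eq_sum_range (p : ℕ) [Fact p.Prime] :
    Gp p = ∑ a ∈ range p, legendreSym p a * 4 ^ (2 * a) := by
  rw [Gp, range_eq_Ico, sum_eq_sum_Ico_succ_bot (Fact.out : p.Prime).pos, ← Ico_add_one_right_eq_Icc,
    Nat.sub_add_cancel (Fact.out : p.Prime).one_le]
  simp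

/-- `2·S_A(4) ≡ (3·4^p − 5) + (4^p + 5)·((4^N−1)/15) − ((2/p)·4^p + 1)·G_p
(mod 4^N − 1)` for `N = 2p`. -/
theorem stmt1 (p : ℕ) [Fact p.Prime] (hodd : Odd p) :
    2 * SA p ≡ (3 * 4 ^ p - 5) + (4 ^ p + 5) * ((4 ^ (2 * p) - 1) / 15)
      - ((legendreSym p 2) * 4 ^ p + 1) * Gp p [ZMOD 4 ^ (2 * p) - 1] := by
  have hM : ((4 ^ (2 * p) - 1 : ℕ) : ℤ) = 4 ^ (2 * p) - 1 := by
    norm_num [Nat.one_le_pow _ _ four_pos]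
  have hx : (4 : ZMod (4 ^ (2 * p) - 1)) ^ (2 * p) = 1 := by
    have h := ZMod.natCast_self (4 ^ (2 * p) - 1)
    rwa [Nat.cast_sub (Nat.one_le_pow _ _ four_pos), sub_eq_zero, Nat.cast_pow, Nat.cast_ofNat,
      Nat.cast_one] at h
  rw [four_pow_two_mul_sub_one_div_fifteen, Gp_eq_sum_range, SA, ← hM,
    ← ZMod.intCast_eq_intCast_iff]
  push_cast
  exact two_mul_sum_seqA_mul_pow hodd hx
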